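/- arXiv:1712.06659 — 8 statements merged into one kernel-verified Lean document; each statement's English description precedes it below -/
import Mathlib

section
/- The optimal cost function of the p-δ-perturbed problem converges pointwise to the restricted optimal cost function over p-stable policies as δ ↓ 0: lim_{δ↓0} Ĵ_{p,δ}(x) = Ĵ_p(x) for all x ∈ X. -/
open Filter Topology ENNReal

namespace DetOC

variable {X U : Type*}

/-- Trajectory generated by policy `π` from initial state `x₀` under dynamics `f`. -/
def traj (f : X → U → X) (π : ℕ → X → U) (x₀ : X) : ℕ → X
  | 0 => x₀
  | k + 1 => f (traj f π x₀ k) (π k (traj f π x₀ k))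

/-- Total (infinite horizon) cost of policy `π` from `x₀`. -/
noncomputable def polCost (f : X → U → X) (g : X → U → ℝ≥0∞) (π : ℕ → X → U)
    (x₀ : X) : ℝ≥0∞ :=
  ∑' k : ℕ, g (traj f π x₀ k) (π k (traj f π x₀ k))

/-- The `p`-`δ`-perturbed cost of policy `π` from `x₀`. -/
noncomputable def pertCost (f : X → U → X) (g : X → U → ℝ≥0∞) (p : X → ℝ≥0∞)
    (δ : NNReal) (π : ℕ → X → U) (x₀ : X) : ℝ≥0∞ :=
  polCost f g π x₀ + (δ : ℝ≥0∞) * ∑' k : ℕ, p (traj f π x₀ k)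

/-- A policy is admissible if it respects the control constraint sets. -/
def IsPolicy (Uc : X → Set U) (π : ℕ → X → U) : Prop := ∀ k x, π k x ∈ Uc x

/-- `π` is `p`-stable from `x₀`: finite perturbed cost for every `δ > 0`. -/
def IsStableFrom (f : X → U → X) (g : X → U → ℝ≥0∞) (p : X → ℝ≥0∞)
    (π : ℕ → X → U) (x₀ : X) : Prop :=
  ∀ δ : NNReal, 0 < δ → pertCost f g p δ π x₀ < ⊤

/-- Shifted policy `π_k = {μ_k, μ_{k+1}, ...}`. -/
def shift (π : ℕ → X → U) (k : ℕ) : ℕ → X → U := fun m => π (m + k)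

/-- Optimal cost function of the `p`-`δ`-perturbed problem. -/
noncomputable def pertOpt (Uc : X → Set U) (f : X → U → X) (g : X → U → ℝ≥0∞)
    (p : X → ℝ≥0∞) (δ : NNReal) (x : X) : ℝ≥0∞ :=
  ⨅ (π : ℕ → X → U) (_ : IsPolicy Uc π), pertCost f g p δ π x

/-- Restricted optimal cost function over the policies that are `p`-stable from `x`. -/
noncomputable def restOpt (Uc : X → Set U) (f : X → U → X) (g : X → U → ℝ≥0∞)
    (p : X → ℝ≥0∞) (x : X) : ℝ≥0∞ :=
  ⨅ (π : ℕ → X → U) (_ : IsPolicy Uc π ∧ IsStableFrom f g p π x), polCost f g π x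

/-- Membership in the set `S_p`: `J(t) = 0` and `J(x_k) → 0` along every trajectory
generated by a policy that is `p`-stable from its initial state. -/
def InSp (Uc : X → Set U) (f : X → U → X) (g : X → U → ℝ≥0∞) (p : X → ℝ≥0∞)
    (t : X) (J : X → ℝ≥0∞) : Prop :=
  J t = 0 ∧ ∀ (π : ℕ → X → U) (x₀ : X), IsPolicy Uc π → IsStableFrom f g p π x₀ →
    Tendsto (fun k => J (traj f π x₀ k)) atTop (𝓝 0)

/-- Bellman operator `T`. -/
noncomputable def bellmanOp (Uc : X → Set U) (f : X → U → X) (g : X → U → ℝ≥0∞)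
    (J : X → ℝ≥0∞) : X → ℝ≥0∞ :=
  fun x => ⨅ u ∈ Uc x, (g x u + J (f x u))

/-- Operator `T_μ` of a stationary policy `μ`. -/
noncomputable def polOp (f : X → U → X) (g : X → U → ℝ≥0∞) (μ : X → U)
    (J : X → ℝ≥0∞) : X → ℝ≥0∞ :=
  fun x => g x (μ x) + J (f x (μ x))

/-- `π` is terminating from `x₀`: the trajectory reaches `t` in finitely many steps. -/
def Terminates (f : X → U → X) (π : ℕ → X → U) (x₀ t : X) : Prop :=
  ∃ k, traj f π x₀ k = t

/-- Restricted optimal cost function over terminating policies. -/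
noncomputable def termOpt (Uc : X → Set U) (f : X → U → X) (g : X → U → ℝ≥0∞)
    (t : X) (x : X) : ℝ≥0∞ :=
  ⨅ (π : ℕ → X → U) (_ : IsPolicy Uc π ∧ Terminates f π x t), polCost f g π x

/-- Overall optimal cost function. -/
noncomputable def optCost (Uc : X → Set U) (f : X → U → X) (g : X → U → ℝ≥0∞)
    (x : X) : ℝ≥0∞ :=
  ⨅ (π : ℕ → X → U) (_ : IsPolicy Uc π), polCost f g π x

end DetOC

open DetOC

/-- `Ĵ_{p,δ}(x) → Ĵ_p(x)` pointwise as `δ ↓ 0`. -/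
theorem stmt4 {X U : Type*} (f : X → U → X) (g : X → U → ℝ≥0∞) (Uc : X → Set U)
    (hU : ∀ x, (Uc x).Nonempty) (t : X)
    (habs : ∀ u ∈ Uc t, f t u = t) (hgt : ∀ u ∈ Uc t, g t u = 0)
    (p : X → ℝ≥0∞) (hpt : p t = 0) (hppos : ∀ x, x ≠ t → 0 < p x)
    (hptop : ∀ x, p x ≠ ⊤) :
    ∀ x : X, Filter.Tendsto (fun δ : NNReal => pertOpt Uc f g p δ x)
      (nhdsWithin 0 (Set.Ioi 0)) (nhds (restOpt Uc f g p x)) := by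
  intro x
  -- Lower bound: restOpt ≤ pertOpt δ for all δ > 0.
  have hlb : ∀ δ : NNReal, 0 < δ → restOpt Uc f g p x ≤ pertOpt Uc f g p δ x := by
    intro δ hδ
    by_contra h
    push_neg at h
    rw [pertOpt] at h
    rw [iInf_lt_iff] at h
    obtain ⟨π, h⟩ := h
    rw [iInf_lt_iff] at h
    obtain ⟨hπ, hc⟩ := h
    have hfin : pertCost f g p δ π x < ⊤ := lt_of_lt_of_le hc le_top
    have hpol : polCost f g π x < ⊤ :=
      lt_of_le_of_lt (by rw [pertCost]; exact le_self_add) hfin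
    have hS : (∑' k : ℕ, p (traj f π x k)) ≠ ⊤ := by
      intro hStop
      have : pertCost f g p δ π x = ⊤ := by
        rw [pertCost, hStop, ENNReal.mul_top (by exact_mod_cast hδ.ne')]
        exact add_top _
      exact hfin.ne this
    have hstab : IsStableFrom f g p π x := by
      intro δ' _
      rw [pertCost]
      exact ENNReal.add_lt_top.2 ⟨hpol,
        ENNReal.mul_lt_top ENNReal.coe_lt_top (lt_top_iff_ne_top.2 hS)⟩
    have hge : restOpt Uc f g p x ≤ polCost f g π x := by
      rw [restOpt]
      exact iInf₂_le π ⟨hπ, hstab⟩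
    have : restOpt Uc f g p x < restOpt Uc f g p x :=
      lt_of_le_of_lt (hge.trans (by rw [pertCost]; exact le_self_add)) hc
    exact lt_irrefl _ this
  rw [tendsto_order]
  constructor
  · intro a ha
    filter_upwards [self_mem_nhdsWithin] with δ hδ
    exact lt_of_lt_of_le ha (hlb δ hδ)
  · intro a ha
    rw [gt_iff_lt, restOpt, iInf_lt_iff] at ha
    obtain ⟨π, ha⟩ := ha
    rw [iInf_lt_iff] at ha
    obtain ⟨⟨hπ, hstab⟩, hc⟩ := ha
    set S := ∑' k : ℕ, p (traj f π x k) with hSdef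
    have hS : S ≠ ⊤ := by
      intro hStop
      have h1 := hstab 1 one_pos
      rw [pertCost, ← hSdef, hStop, ENNReal.mul_top (by norm_num)] at h1
      simp at h1
    have h1 : Tendsto (fun δ : NNReal => (δ : ℝ≥0∞) * S) (nhdsWithin 0 (Set.Ioi 0))
        (nhds 0) := by
      have hcoe : Tendsto (fun δ : NNReal => (δ : ℝ≥0∞)) (nhds 0) (nhds ((0 : NNReal) : ℝ≥0∞)) :=
        ENNReal.tendsto_coe.2 tendsto_id
      have := ENNReal.Tendsto.mul_const hcoe (Or.inr hS)
      simpa using this.mono_left nhdsWithin_le_nhds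
    have htend : Tendsto (fun δ : NNReal => polCost f g π x + (δ : ℝ≥0∞) * S)
        (nhdsWithin 0 (Set.Ioi 0)) (nhds (polCost f g π x)) := by
      simpa using Tendsto.const_add (polCost f g π x) h1
    filter_upwards [htend.eventually (gt_mem_nhds hc)] with δ hδ
    refine lt_of_le_of_lt ?_ hδ
    rw [pertOpt]
    exact iInf₂_le π hπ
end

section
/- For every δ > 0, the optimal cost function Ĵ_{p,δ} of the p-δ-perturbed problem is the unique solution, within the set S_p, of the perturbed Bellman equation J(x) = inf_{u ∈ U(x)} { g(x,u) + δ p(x) + J(f(x,u)) }. -/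
open Filter Topology ENNReal

open DetOC
section StmtAux

open Filter Topology ENNReal DetOC

variable {X U : Type*}

lemma traj_shift (f : X → U → X) (π : ℕ → X → U) (x₀ : X) (k m : ℕ) :
    traj f (shift π k) (traj f π x₀ k) m = traj f π x₀ (m + k) := by
  induction m with
  | zero => rw [Nat.zero_add]; rfl
  | succ m ih =>
    have h : m + 1 + k = (m + k) + 1 := Nat.add_right_comm m 1 k
    rw [h]
    show f (traj f (shift π k) (traj f π x₀ k) m)
        (π (m + k) (traj f (shift π k) (traj f π x₀ k) m))
      = f (traj f π x₀ (m + k)) (π (m + k) (traj f π x₀ (m + k)))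
    rw [ih]

lemma pertCost_tsum (f : X → U → X) (g : X → U → ℝ≥0∞) (p : X → ℝ≥0∞) (δ : NNReal)
    (π : ℕ → X → U) (x : X) :
    pertCost f g p δ π x
      = ∑' k : ℕ, (g (traj f π x k) (π k (traj f π x k)) + (δ : ℝ≥0∞) * p (traj f π x k)) := by
  rw [ENNReal.tsum_add, ENNReal.tsum_mul_left]; rfl

lemma pertCost_shift (f : X → U → X) (g : X → U → ℝ≥0∞) (p : X → ℝ≥0∞) (δ : NNReal)
    (π : ℕ → X → U) (x : X) (k : ℕ) :
    pertCost f g p δ (shift π k) (traj f π x k)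
      = ∑' m : ℕ, (g (traj f π x (m + k)) (π (m + k) (traj f π x (m + k)))
          + (δ : ℝ≥0∞) * p (traj f π x (m + k))) := by
  rw [pertCost_tsum]
  exact tsum_congr fun m => by rw [traj_shift]; rfl

lemma pertCost_step (f : X → U → X) (g : X → U → ℝ≥0∞) (p : X → ℝ≥0∞) (δ : NNReal)
    (π : ℕ → X → U) (x : X) :
    pertCost f g p δ π x
      = (g x (π 0 x) + (δ : ℝ≥0∞) * p x)
        + pertCost f g p δ (shift π 1) (f x (π 0 x)) := by
  have h2 : pertCost f g p δ (shift π 1) (f x (π 0 x))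
      = ∑' m : ℕ, (g (traj f π x (m + 1)) (π (m + 1) (traj f π x (m + 1)))
          + (δ : ℝ≥0∞) * p (traj f π x (m + 1))) := pertCost_shift f g p δ π x 1
  rw [h2, pertCost_tsum, tsum_eq_zero_add' ENNReal.summable]; rfl

lemma stable_of_finite {f : X → U → X} {g : X → U → ℝ≥0∞} {p : X → ℝ≥0∞} {δ : NNReal}
    (hδ : 0 < δ) {π : ℕ → X → U} {x : X}
    (h : pertCost f g p δ π x ≠ ⊤) : IsStableFrom f g p π x := by
  simp only [pertCost] at h
  obtain ⟨h1, h2⟩ := ENNReal.add_ne_top.mp h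
  have hS : ∑' k : ℕ, p (traj f π x k) ≠ ⊤ := by
    intro hS
    rw [hS, ENNReal.mul_top (by exact_mod_cast hδ.ne')] at h2
    exact h2 rfl
  intro δ' _
  simp only [pertCost]
  exact ENNReal.add_lt_top.mpr ⟨h1.lt_top,
    ENNReal.mul_lt_top ENNReal.coe_lt_top hS.lt_top⟩

end StmtAux
section StmtAux2

open Filter Topology ENNReal DetOC

variable {X U : Type*}

lemma bellman_pert (f : X → U → X) (g : X → U → ℝ≥0∞) (Uc : X → Set U)
    (hU : ∀ x, (Uc x).Nonempty) (p : X → ℝ≥0∞) (δ : NNReal) (x : X) :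
    pertOpt Uc f g p δ x
      = ⨅ u ∈ Uc x, (g x u + (δ : ℝ≥0∞) * p x + pertOpt Uc f g p δ (f x u)) := by
  classical
  apply le_antisymm
  · refine le_iInf₂ fun u hu => ?_
    apply ENNReal.le_of_forall_pos_le_add
    intro ε hε hlt
    have hJ : pertOpt Uc f g p δ (f x u) < ⊤ := lt_of_le_of_lt le_add_self hlt
    have hlt2 : pertOpt Uc f g p δ (f x u) < pertOpt Uc f g p δ (f x u) + (ε : ℝ≥0∞) :=
      ENNReal.lt_add_right hJ.ne (by exact_mod_cast hε.ne')
    obtain ⟨π, hπ, hπc⟩ : ∃ π, IsPolicy Uc π ∧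
        pertCost f g p δ π (f x u) < pertOpt Uc f g p δ (f x u) + (ε : ℝ≥0∞) := by
      conv_lhs at hlt2 => rw [pertOpt]
      obtain ⟨π, h1⟩ := iInf_lt_iff.mp hlt2
      obtain ⟨h2, h3⟩ := iInf_lt_iff.mp h1
      exact ⟨π, h2, h3⟩
    set π' : ℕ → X → U :=
      fun k => Nat.rec (fun y => if y = x then u else (hU y).some) (fun m _ => π m) k with hπ'
    have hpol' : IsPolicy Uc π' := by
      intro k y
      cases k with
      | zero =>
        show (if y = x then u else (hU y).some) ∈ Uc y
        split
        · next h => rw [h]; exact hu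
        · exact (hU y).some_mem
      | succ k => exact hπ k y
    have h0 : π' 0 x = u := if_pos rfl
    have hs : shift π' 1 = π := funext fun m => rfl
    have hstep : pertCost f g p δ π' x
        = (g x u + (δ : ℝ≥0∞) * p x) + pertCost f g p δ π (f x u) := by
      have h := pertCost_step f g p δ π' x
      rw [h0, hs] at h
      exact h
    calc pertOpt Uc f g p δ x ≤ pertCost f g p δ π' x := iInf₂_le π' hpol'
      _ = (g x u + (δ : ℝ≥0∞) * p x) + pertCost f g p δ π (f x u) := hstep
      _ ≤ (g x u + (δ : ℝ≥0∞) * p x) + (pertOpt Uc f g p δ (f x u) + (ε : ℝ≥0∞)) :=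
          add_le_add_right hπc.le _
      _ = g x u + (δ : ℝ≥0∞) * p x + pertOpt Uc f g p δ (f x u) + (ε : ℝ≥0∞) :=
          (add_assoc _ _ _).symm
  · refine le_iInf₂ fun π hπ => ?_
    calc (⨅ u ∈ Uc x, (g x u + (δ : ℝ≥0∞) * p x + pertOpt Uc f g p δ (f x u)))
        ≤ g x (π 0 x) + (δ : ℝ≥0∞) * p x + pertOpt Uc f g p δ (f x (π 0 x)) :=
          iInf₂_le _ (hπ 0 x)
      _ ≤ g x (π 0 x) + (δ : ℝ≥0∞) * p x
            + pertCost f g p δ (shift π 1) (f x (π 0 x)) :=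
          add_le_add_right (iInf₂_le (shift π 1) (fun m y => hπ (m + 1) y)) _
      _ = pertCost f g p δ π x := (pertCost_step f g p δ π x).symm

lemma pertOpt_t_zero (f : X → U → X) (g : X → U → ℝ≥0∞) (Uc : X → Set U)
    (hU : ∀ x, (Uc x).Nonempty) (t : X)
    (habs : ∀ u ∈ Uc t, f t u = t) (hgt : ∀ u ∈ Uc t, g t u = 0)
    (p : X → ℝ≥0∞) (hpt : p t = 0) (δ : NNReal) :
    pertOpt Uc f g p δ t = 0 := by
  classical
  have hpol : IsPolicy Uc (fun (_ : ℕ) y => (hU y).some) := fun k y => (hU y).some_mem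
  have htraj : ∀ k, traj f (fun (_ : ℕ) y => (hU y).some) t k = t := by
    intro k
    induction k with
    | zero => rfl
    | succ k ih =>
      show f (traj f _ t k) ((hU (traj f _ t k)).some) = t
      rw [ih]
      exact habs _ ((hU t).some_mem)
  have hc : pertCost f g p δ (fun (_ : ℕ) y => (hU y).some) t = 0 := by
    simp only [pertCost, polCost, htraj, hpt, hgt _ ((hU t).some_mem), tsum_zero,
      mul_zero, add_zero]
  exact le_antisymm (le_trans (iInf₂_le _ hpol) hc.le) zero_le

lemma tendsto_pertOpt (f : X → U → X) (g : X → U → ℝ≥0∞) (Uc : X → Set U)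
    (p : X → ℝ≥0∞) (δ : NNReal) (hδ : 0 < δ) (π : ℕ → X → U) (x₀ : X)
    (hπ : IsPolicy Uc π) (hst : IsStableFrom f g p π x₀) :
    Tendsto (fun k => pertOpt Uc f g p δ (traj f π x₀ k)) atTop (𝓝 0) := by
  have hFfin : ∑' k : ℕ, (g (traj f π x₀ k) (π k (traj f π x₀ k))
      + (δ : ℝ≥0∞) * p (traj f π x₀ k)) ≠ ⊤ := by
    rw [← pertCost_tsum]
    exact (hst δ hδ).ne
  have htail := ENNReal.tendsto_sum_nat_add
    (fun k => g (traj f π x₀ k) (π k (traj f π x₀ k)) + (δ : ℝ≥0∞) * p (traj f π x₀ k)) hFfin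
  refine tendsto_of_tendsto_of_tendsto_of_le_of_le tendsto_const_nhds htail
    (fun k => zero_le) (fun k => ?_)
  have h1 : pertOpt Uc f g p δ (traj f π x₀ k)
      ≤ pertCost f g p δ (shift π k) (traj f π x₀ k) :=
    iInf₂_le (shift π k) (fun m y => hπ (m + k) y)
  rw [pertCost_shift] at h1
  exact h1

end StmtAux2
section StmtAux3

open Filter Topology ENNReal DetOC

variable {X U : Type*}

lemma J_le_pertCost (f : X → U → X) (g : X → U → ℝ≥0∞) (Uc : X → Set U)
    (t : X) (p : X → ℝ≥0∞) (δ : NNReal) (hδ : 0 < δ) {J : X → ℝ≥0∞}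
    (hJ : InSp Uc f g p t J)
    (hBell : ∀ x : X, J x = ⨅ u ∈ Uc x, (g x u + (δ : ℝ≥0∞) * p x + J (f x u)))
    (π : ℕ → X → U) (hπ : IsPolicy Uc π) (x : X) :
    J x ≤ pertCost f g p δ π x := by
  by_cases htop : pertCost f g p δ π x = ⊤
  · exact htop ▸ le_top
  have hst := stable_of_finite hδ htop
  have htend := hJ.2 π x hπ hst
  have key : ∀ n : ℕ, J x ≤ (∑ k ∈ Finset.range n,
      (g (traj f π x k) (π k (traj f π x k)) + (δ : ℝ≥0∞) * p (traj f π x k)))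
      + J (traj f π x n) := by
    intro n
    induction n with
    | zero => simp only [Finset.range_zero, Finset.sum_empty, zero_add, add_zero]; exact le_rfl
    | succ n ih =>
      refine ih.trans ?_
      rw [Finset.sum_range_succ, add_assoc]
      refine add_le_add_right ?_ _
      have h2 : J (traj f π x n) ≤ g (traj f π x n) (π n (traj f π x n))
          + (δ : ℝ≥0∞) * p (traj f π x n) + J (traj f π x (n + 1)) := by
        rw [hBell]
        exact iInf₂_le _ (hπ n _)
      exact h2
  have hsum := ENNReal.tendsto_nat_tsum
    (fun k => g (traj f π x k) (π k (traj f π x k)) + (δ : ℝ≥0∞) * p (traj f π x k))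
  have hlim := hsum.add htend
  rw [add_zero] at hlim
  have h3 := ge_of_tendsto' hlim key
  rwa [← pertCost_tsum] at h3

lemma pertOpt_le_J (f : X → U → X) (g : X → U → ℝ≥0∞) (Uc : X → Set U)
    (hU : ∀ x, (Uc x).Nonempty) (p : X → ℝ≥0∞) (δ : NNReal) {J : X → ℝ≥0∞}
    (hBell : ∀ x : X, J x = ⨅ u ∈ Uc x, (g x u + (δ : ℝ≥0∞) * p x + J (f x u)))
    (x : X) : pertOpt Uc f g p δ x ≤ J x := by
  classical
  apply ENNReal.le_of_forall_pos_le_add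
  intro ε hε hJx
  obtain ⟨ε', hε'pos, hε'sum⟩ := ENNReal.exists_pos_sum_of_countable
    (show (ε : ℝ≥0∞) ≠ 0 by exact_mod_cast hε.ne') ℕ
  have hch : ∀ (k : ℕ) (y : X), ∃ u, u ∈ Uc y ∧
      (J y ≠ ⊤ → g y u + (δ : ℝ≥0∞) * p y + J (f y u) ≤ J y + (ε' k : ℝ≥0∞)) := by
    intro k y
    by_cases hy : J y = ⊤
    · exact ⟨(hU y).some, (hU y).some_mem, fun h => absurd hy h⟩
    · have hlt : J y < J y + (ε' k : ℝ≥0∞) :=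
        ENNReal.lt_add_right hy (by exact_mod_cast (hε'pos k).ne')
      conv_lhs at hlt => rw [hBell y]
      obtain ⟨u, h1⟩ := iInf_lt_iff.mp hlt
      obtain ⟨hu, h2⟩ := iInf_lt_iff.mp h1
      exact ⟨u, hu, fun _ => h2.le⟩
  choose π hπmem hπle using hch
  have hpol : IsPolicy Uc π := hπmem
  have hεfin : ∀ n : ℕ, (∑ k ∈ Finset.range n, ((ε' k : ℝ≥0∞))) ≤ (ε : ℝ≥0∞) :=
    fun n => le_trans (ENNReal.sum_le_tsum _) hε'sum.le
  have key : ∀ n : ℕ, (∑ k ∈ Finset.range n,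
      (g (traj f π x k) (π k (traj f π x k)) + (δ : ℝ≥0∞) * p (traj f π x k)))
      + J (traj f π x n) ≤ J x + ∑ k ∈ Finset.range n, ((ε' k : ℝ≥0∞)) := by
    intro n
    induction n with
    | zero => simp only [Finset.range_zero, Finset.sum_empty, zero_add, add_zero]; exact le_rfl
    | succ n ih =>
      have hfin : J (traj f π x n) ≠ ⊤ := by
        intro h
        have h1 : (⊤ : ℝ≥0∞) ≤ J x + ∑ k ∈ Finset.range n, ((ε' k : ℝ≥0∞)) := by
          calc (⊤ : ℝ≥0∞) = (∑ k ∈ Finset.range n,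
              (g (traj f π x k) (π k (traj f π x k)) + (δ : ℝ≥0∞) * p (traj f π x k)))
              + J (traj f π x n) := by rw [h, add_top]
            _ ≤ _ := ih
        have h2 : J x + ∑ k ∈ Finset.range n, ((ε' k : ℝ≥0∞)) < ⊤ :=
          ENNReal.add_lt_top.mpr ⟨hJx,
            lt_of_le_of_lt (hεfin n) ENNReal.coe_lt_top⟩
        exact absurd (lt_of_le_of_lt h1 h2) (lt_irrefl _)
      have hstep := hπle n (traj f π x n) hfin
      rw [Finset.sum_range_succ, Finset.sum_range_succ]
      calc (∑ k ∈ Finset.range n,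
            (g (traj f π x k) (π k (traj f π x k)) + (δ : ℝ≥0∞) * p (traj f π x k)))
            + (g (traj f π x n) (π n (traj f π x n)) + (δ : ℝ≥0∞) * p (traj f π x n))
            + J (traj f π x (n + 1))
          = (∑ k ∈ Finset.range n,
            (g (traj f π x k) (π k (traj f π x k)) + (δ : ℝ≥0∞) * p (traj f π x k)))
            + ((g (traj f π x n) (π n (traj f π x n)) + (δ : ℝ≥0∞) * p (traj f π x n))
            + J (traj f π x (n + 1))) := add_assoc _ _ _
        _ ≤ (∑ k ∈ Finset.range n,
            (g (traj f π x k) (π k (traj f π x k)) + (δ : ℝ≥0∞) * p (traj f π x k)))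
            + (J (traj f π x n) + (ε' n : ℝ≥0∞)) := add_le_add_right hstep _
        _ = ((∑ k ∈ Finset.range n,
            (g (traj f π x k) (π k (traj f π x k)) + (δ : ℝ≥0∞) * p (traj f π x k)))
            + J (traj f π x n)) + (ε' n : ℝ≥0∞) := (add_assoc _ _ _).symm
        _ ≤ (J x + ∑ k ∈ Finset.range n, ((ε' k : ℝ≥0∞))) + (ε' n : ℝ≥0∞) :=
            add_le_add_left ih _
        _ = J x + (∑ k ∈ Finset.range n, ((ε' k : ℝ≥0∞)) + (ε' n : ℝ≥0∞)) := add_assoc _ _ _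
  have hbound : ∀ n : ℕ, (∑ k ∈ Finset.range n,
      (g (traj f π x k) (π k (traj f π x k)) + (δ : ℝ≥0∞) * p (traj f π x k)))
      ≤ J x + (ε : ℝ≥0∞) :=
    fun n => le_self_add.trans ((key n).trans (add_le_add_right (hεfin n) _))
  have hπcost : pertCost f g p δ π x ≤ J x + (ε : ℝ≥0∞) := by
    rw [pertCost_tsum, ENNReal.tsum_eq_iSup_nat]
    exact iSup_le hbound
  exact le_trans (iInf₂_le π hpol) hπcost

end StmtAux3
/-- For every `δ > 0`, `Ĵ_{p,δ}` is the unique solution within `S_p` of the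
perturbed Bellman equation `J(x) = inf_{u ∈ U(x)} { g(x,u) + δ p(x) + J(f(x,u)) }`. -/
theorem stmt7 {X U : Type*} (f : X → U → X) (g : X → U → ℝ≥0∞) (Uc : X → Set U)
    (hU : ∀ x, (Uc x).Nonempty) (t : X)
    (habs : ∀ u ∈ Uc t, f t u = t) (hgt : ∀ u ∈ Uc t, g t u = 0)
    (p : X → ℝ≥0∞) (hpt : p t = 0) (hppos : ∀ x, x ≠ t → 0 < p x)
    (hptop : ∀ x, p x ≠ ⊤)
    (δ : NNReal) (hδ : 0 < δ) :
    InSp Uc f g p t (pertOpt Uc f g p δ) ∧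
    (∀ x : X, pertOpt Uc f g p δ x =
      ⨅ u ∈ Uc x, (g x u + (δ : ℝ≥0∞) * p x + pertOpt Uc f g p δ (f x u))) ∧
    (∀ J : X → ℝ≥0∞, InSp Uc f g p t J →
      (∀ x : X, J x = ⨅ u ∈ Uc x, (g x u + (δ : ℝ≥0∞) * p x + J (f x u))) →
      J = pertOpt Uc f g p δ) := by
  refine ⟨⟨pertOpt_t_zero f g Uc hU t habs hgt p hpt δ,
      fun π x₀ hπ hst => tendsto_pertOpt f g Uc p δ hδ π x₀ hπ hst⟩,
    fun x => bellman_pert f g Uc hU p δ x, fun J hJ hBell => ?_⟩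
  funext x
  refine le_antisymm ?_ (pertOpt_le_J f g Uc hU p δ hBell x)
  exact le_iInf₂ fun π hπ => J_le_pertCost f g Uc t p δ hδ hJ hBell π hπ x
end

section
/- The restricted optimal cost function Ĵ_p over p-stable policies is a solution of Bellman's equation: Ĵ_p(x) = inf_{u ∈ U(x)} { g(x,u) + Ĵ_p(f(x,u)) } for all x ∈ X. -/
open Filter Topology ENNReal

open DetOC
section Aux

open DetOC Filter Topology ENNReal

variable {X U : Type*}

lemma traj_succ_shift (f : X → U → X) (π : ℕ → X → U) (x : X) :
    ∀ k, traj f π x (k + 1) = traj f (shift π 1) (f x (π 0 x)) k := by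
  intro k
  induction k with
  | zero => rfl
  | succ k ih =>
    show f _ _ = f _ _
    rw [ih]; rfl

lemma polCost_succ (f : X → U → X) (g : X → U → ℝ≥0∞) (π : ℕ → X → U) (x : X) :
    polCost f g π x = g x (π 0 x) + polCost f g (shift π 1) (f x (π 0 x)) := by
  unfold polCost
  rw [tsum_eq_zero_add' ENNReal.summable]
  congr 1
  exact tsum_congr fun k => by rw [traj_succ_shift]; rfl

lemma tsum_p_succ (f : X → U → X) (p : X → ℝ≥0∞) (π : ℕ → X → U) (x : X) :
    ∑' k : ℕ, p (traj f π x k)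
      = p x + ∑' k : ℕ, p (traj f (shift π 1) (f x (π 0 x)) k) := by
  rw [tsum_eq_zero_add' ENNReal.summable]
  congr 1
  exact tsum_congr fun k => by rw [traj_succ_shift]

lemma pertCost_succ (f : X → U → X) (g : X → U → ℝ≥0∞) (p : X → ℝ≥0∞) (δ : NNReal)
    (π : ℕ → X → U) (x : X) :
    pertCost f g p δ π x
      = g x (π 0 x) + (δ : ℝ≥0∞) * p x
        + pertCost f g p δ (shift π 1) (f x (π 0 x)) := by
  unfold pertCost
  rw [polCost_succ, tsum_p_succ, mul_add]
  ring

end Aux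

/-- The restricted optimal cost function `Ĵ_p` over `p`-stable policies
solves Bellman's equation. -/
theorem stmt8 {X U : Type*} (f : X → U → X) (g : X → U → ℝ≥0∞) (Uc : X → Set U)
    (hU : ∀ x, (Uc x).Nonempty) (t : X)
    (habs : ∀ u ∈ Uc t, f t u = t) (hgt : ∀ u ∈ Uc t, g t u = 0)
    (p : X → ℝ≥0∞) (hpt : p t = 0) (hppos : ∀ x, x ≠ t → 0 < p x)
    (hptop : ∀ x, p x ≠ ⊤) :
    ∀ x : X, restOpt Uc f g p x = ⨅ u ∈ Uc x, (g x u + restOpt Uc f g p (f x u)) := by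
  classical
  intro x
  apply le_antisymm
  · -- restOpt x ≤ ⨅ u, g x u + restOpt (f x u)
    refine le_iInf₂ fun u hu => ?_
    rcases eq_or_ne (g x u) ⊤ with hg | hg
    · rw [hg, top_add]; exact le_top
    have key : ∀ π : ℕ → X → U, (IsPolicy Uc π ∧ IsStableFrom f g p π (f x u)) →
        restOpt Uc f g p x ≤ g x u + polCost f g π (f x u) := by
      intro π hπ
      set μ0 : X → U := fun y => if h : y = x then u else (hU y).some with hμ0
      set π' : ℕ → X → U := fun k => Nat.casesOn k μ0 π with hπ'
      have hπ'0 : π' 0 x = u := by simp [hπ', hμ0]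
      have hshift : shift π' 1 = π := rfl
      have hpol' : IsPolicy Uc π' := by
        intro k y
        cases k with
        | zero =>
          by_cases h : y = x
          · subst h; simpa [hπ', hμ0] using hu
          · simpa [hπ', hμ0, h] using (hU y).some_mem
        | succ k => exact hπ.1 k y
      have hstab' : IsStableFrom f g p π' x := by
        intro δ hδ
        rw [pertCost_succ, hπ'0, hshift]
        refine ENNReal.add_lt_top.2 ⟨ENNReal.add_lt_top.2 ⟨hg.lt_top, ?_⟩, hπ.2 δ hδ⟩
        exact ENNReal.mul_lt_top ENNReal.coe_lt_top (hptop x).lt_top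
      calc restOpt Uc f g p x ≤ polCost f g π' x := iInf₂_le π' ⟨hpol', hstab'⟩
        _ = g x u + polCost f g π (f x u) := by
            rw [polCost_succ, hπ'0, hshift]
    have heq : g x u + restOpt Uc f g p (f x u)
        = ⨅ (π : ℕ → X → U) (_ : IsPolicy Uc π ∧ IsStableFrom f g p π (f x u)),
            (g x u + polCost f g π (f x u)) := by
      rw [restOpt, ENNReal.add_iInf]
      exact iInf_congr fun π => ENNReal.add_iInf
    rw [heq]
    exact le_iInf fun π => le_iInf fun hπ => key π hπ
  · -- ⨅ u ... ≤ restOpt x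
    simp only [restOpt]
    refine le_iInf₂ fun π hπ => ?_
    obtain ⟨hpol, hst⟩ := hπ
    have hpol' : IsPolicy Uc (shift π 1) := fun m y => hpol (m + 1) y
    have hst' : IsStableFrom f g p (shift π 1) (f x (π 0 x)) := by
      intro δ hδ
      have h := hst δ hδ
      rw [pertCost_succ f g p δ π x] at h
      exact lt_of_le_of_lt le_add_self h
    calc (⨅ u ∈ Uc x, (g x u + restOpt Uc f g p (f x u)))
        ≤ g x (π 0 x) + restOpt Uc f g p (f x (π 0 x)) := iInf₂_le (π 0 x) (hpol 0 x)
      _ ≤ g x (π 0 x) + polCost f g (shift π 1) (f x (π 0 x)) :=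
          add_le_add le_rfl (show restOpt Uc f g p (f x (π 0 x)) ≤ polCost f g (shift π 1) (f x (π 0 x)) from iInf₂_le (shift π 1) ⟨hpol', hst'⟩)
      _ = polCost f g π x := (polCost_succ f g π x).symm
end

section
/- Ĵ_p is the unique solution of Bellman's equation J(x) = inf_{u ∈ U(x)} { g(x,u) + J(f(x,u)) } within the set W_p = { J ∈ S_p : Ĵ_p ≤ J }. Moreover, the value iteration sequence J_{k+1}(x) = inf_{u ∈ U(x)} { g(x,u) + J_k(f(x,u)) } converges pointwise to Ĵ_p from any starting function J₀ ∈ W_p. -/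
open Filter Topology ENNReal

open DetOC

section Aux

variable {X U : Type*}

lemma traj_shift_one (f : X → U → X) (π : ℕ → X → U) (x : X) (k : ℕ) :
    traj f (shift π 1) (f x (π 0 x)) k = traj f π x (k + 1) := by
  induction k with
  | zero => rfl
  | succ k ih => simp only [traj, shift, ih]

lemma bellman_mono (Uc : X → Set U) (f : X → U → X) (g : X → U → ℝ≥0∞)
    {J J' : X → ℝ≥0∞} (h : J ≤ J') : bellmanOp Uc f g J ≤ bellmanOp Uc f g J' :=
  fun _ => iInf_mono fun _ => iInf_mono fun _ => add_le_add_right (h _) _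

lemma iterate_le_sum (f : X → U → X) (g : X → U → ℝ≥0∞) (Uc : X → Set U)
    (J : X → ℝ≥0∞) (k : ℕ) :
    ∀ (π : ℕ → X → U), IsPolicy Uc π → ∀ x : X,
      (bellmanOp Uc f g)^[k] J x ≤
        (∑ i ∈ Finset.range k, g (traj f π x i) (π i (traj f π x i))) +
          J (traj f π x k) := by
  induction k with
  | zero => intro π hπ x; simp [traj]
  | succ k ih =>
    intro π hπ x
    rw [Function.iterate_succ_apply']
    have h1 : (bellmanOp Uc f g) ((bellmanOp Uc f g)^[k] J) x ≤
        g x (π 0 x) + (bellmanOp Uc f g)^[k] J (f x (π 0 x)) :=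
      iInf₂_le (π 0 x) (hπ 0 x)
    have h2 := ih (shift π 1) (fun m y => hπ (m + 1) y) (f x (π 0 x))
    simp only [traj_shift_one, shift] at h2
    calc (bellmanOp Uc f g) ((bellmanOp Uc f g)^[k] J) x
        ≤ g x (π 0 x) +
            ((∑ i ∈ Finset.range k,
              g (traj f π x (i + 1)) (π (i + 1) (traj f π x (i + 1)))) +
              J (traj f π x (k + 1))) := h1.trans (add_le_add_right h2 _)
      _ = _ := by
          rw [Finset.sum_range_succ']
          show _ = _ + g (traj f π x 0) (π 0 (traj f π x 0)) + _
          simp only [traj]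
          ring

end Aux

/-- `Jhat_p` is the unique solution of Bellman's equation within
`W_p = { J ∈ S_p : Jhat_p ≤ J }`, and VI converges to `Jhat_p` from any `J₀ ∈ W_p`. -/
theorem stmt9 {X U : Type*} (f : X → U → X) (g : X → U → ℝ≥0∞) (Uc : X → Set U)
    (hU : ∀ x, (Uc x).Nonempty) (t : X)
    (habs : ∀ u ∈ Uc t, f t u = t) (hgt : ∀ u ∈ Uc t, g t u = 0)
    (p : X → ℝ≥0∞) (hpt : p t = 0) (hppos : ∀ x, x ≠ t → 0 < p x)
    (hptop : ∀ x, p x ≠ ⊤)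
    (hbell : ∀ x : X, restOpt Uc f g p x =
      ⨅ u ∈ Uc x, (g x u + restOpt Uc f g p (f x u)))
    (hSp : InSp Uc f g p t (restOpt Uc f g p))
    (hstab : ∃ π : ℕ → X → U, IsPolicy Uc π ∧
      ∀ x : X, (∃ π' : ℕ → X → U, IsPolicy Uc π' ∧ IsStableFrom f g p π' x) →
        IsStableFrom f g p π x) :
    (∀ J : X → ℝ≥0∞, InSp Uc f g p t J → restOpt Uc f g p ≤ J →
      (∀ x : X, J x = ⨅ u ∈ Uc x, (g x u + J (f x u))) → J = restOpt Uc f g p) ∧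
    (∀ J₀ : X → ℝ≥0∞, InSp Uc f g p t J₀ → restOpt Uc f g p ≤ J₀ →
      ∀ x : X, Filter.Tendsto (fun k => (bellmanOp Uc f g)^[k] J₀ x)
        Filter.atTop (nhds (restOpt Uc f g p x))) := by
  set Jhat := restOpt Uc f g p with hJhat
  have hfix : bellmanOp Uc f g Jhat = Jhat := funext fun x => (hbell x).symm
  have part2 : ∀ J₀ : X → ℝ≥0∞, InSp Uc f g p t J₀ → Jhat ≤ J₀ →
      ∀ x : X, Filter.Tendsto (fun k => (bellmanOp Uc f g)^[k] J₀ x)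
        Filter.atTop (nhds (Jhat x)) := by
    intro J₀ hSpJ₀ hle x
    have hlow : ∀ k, Jhat x ≤ (bellmanOp Uc f g)^[k] J₀ x := by
      intro k
      have : Jhat ≤ (bellmanOp Uc f g)^[k] J₀ := by
        induction k with
        | zero => exact hle
        | succ k ih =>
          rw [Function.iterate_succ_apply']
          calc Jhat = bellmanOp Uc f g Jhat := hfix.symm
            _ ≤ _ := bellman_mono Uc f g ih
      exact this x
    refine tendsto_of_le_liminf_of_limsup_le ?_ ?_
    · exact le_liminf_of_le (by isBoundedDefault)
        (Filter.Eventually.of_forall hlow)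
    · show Filter.limsup _ _ ≤ Jhat x
      rw [hJhat]
      simp only [restOpt]
      refine le_iInf₂ fun π hπ => ?_
      have hb : ∀ k, (bellmanOp Uc f g)^[k] J₀ x ≤
          polCost f g π x + J₀ (traj f π x k) := fun k =>
        (iterate_le_sum f g Uc J₀ k π hπ.1 x).trans
          (add_le_add_left (ENNReal.sum_le_tsum (Finset.range k)) _)
      have ha : Filter.Tendsto (fun k => J₀ (traj f π x k)) Filter.atTop (nhds 0) :=
        hSpJ₀.2 π x hπ.1 hπ.2
      have hc : Filter.Tendsto (fun k => polCost f g π x + J₀ (traj f π x k))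
          Filter.atTop (nhds (polCost f g π x)) := by
        simpa using tendsto_const_nhds.add ha
      calc Filter.limsup (fun k => (bellmanOp Uc f g)^[k] J₀ x) Filter.atTop
          ≤ Filter.limsup (fun k => polCost f g π x + J₀ (traj f π x k))
              Filter.atTop :=
            Filter.limsup_le_limsup (Filter.Eventually.of_forall hb)
        _ = polCost f g π x := hc.limsup_eq
  constructor
  · intro J hSpJ hle hJbell
    have hJfix : bellmanOp Uc f g J = J := funext fun x => (hJbell x).symm
    funext x
    have h := part2 J hSpJ hle x
    have heq : (fun k => (bellmanOp Uc f g)^[k] J x) = fun _ => J x := by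
      funext k
      rw [Function.iterate_fixed hJfix]
    rw [heq] at h
    exact tendsto_nhds_unique tendsto_const_nhds h
  · exact part2
end

section
/- If J̃: X → [0,∞] with J̃(t) = 0 is any solution of Bellman's equation J(x) = inf_{u ∈ U(x)} { g(x,u) + J(f(x,u)) }, then J̃ ≤ J⁺, where J⁺(x) is the optimal cost over policies that reach the destination t in finitely many steps from x. That is, J⁺ is the largest solution of Bellman's equation in the class { J : X → [0,∞], J(t) = 0 }. -/
open Filter Topology ENNReal

open DetOC

/-- `J⁺` is the largest solution of Bellman's equation within
`{ J : X → [0,∞], J(t) = 0 }`. -/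
theorem stmt11 {X U : Type*} (f : X → U → X) (g : X → U → ℝ≥0∞) (Uc : X → Set U)
    (hU : ∀ x, (Uc x).Nonempty) (t : X)
    (habs : ∀ u ∈ Uc t, f t u = t) (hgt : ∀ u ∈ Uc t, g t u = 0)
    (Jt : X → ℝ≥0∞) (hJt : Jt t = 0)
    (hbell : ∀ x : X, Jt x = ⨅ u ∈ Uc x, (g x u + Jt (f x u))) :
    Jt ≤ termOpt Uc f g t := by
  intro x
  refine le_iInf₂ fun π hπ => ?_
  obtain ⟨hpol, N, hN⟩ := hπ
  have key : ∀ n : ℕ, Jt x ≤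
      (∑ k ∈ Finset.range n, g (traj f π x k) (π k (traj f π x k))) + Jt (traj f π x n) := by
    intro n
    induction n with
    | zero => simp [traj]
    | succ m ih =>
      refine ih.trans ?_
      rw [Finset.sum_range_succ, add_assoc]
      gcongr
      rw [hbell (traj f π x m)]
      exact iInf₂_le _ (hpol m _)
  calc Jt x ≤ (∑ k ∈ Finset.range N, g (traj f π x k) (π k (traj f π x k))) + Jt (traj f π x N) :=
        key N
    _ = ∑ k ∈ Finset.range N, g (traj f π x k) (π k (traj f π x k)) := by rw [hN, hJt, add_zero]
    _ ≤ polCost f g π x := ENNReal.sum_le_tsum _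
end

section
/- Assume J* = J⁺ (the optimal cost over terminating policies equals the overall optimal cost). Then the sequence {J_{μ^k}} generated by policy iteration—where μ^{k+1}(x) minimizes g(x,u) + J_{μ^k}(f(x,u)) over u ∈ U(x) for each x—is pointwise nonincreasing and converges pointwise to J*. -/
open Filter Topology ENNReal

open DetOC


section AuxPI

variable {X U : Type*}

private lemma traj_stat_succ (f : X → U → X) (ν : X → U) (x : X) :
    ∀ k, traj f (fun _ => ν) x (k + 1) = traj f (fun _ => ν) (f x (ν x)) k := by
  intro k
  induction k with
  | zero => rfl
  | succ k ih =>
    have h2 : traj f (fun _ => ν) x (k + 1 + 1)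
        = f (traj f (fun _ => ν) x (k + 1)) (ν (traj f (fun _ => ν) x (k + 1))) := rfl
    rw [h2, ih]; rfl

private lemma polCost_stat (f : X → U → X) (g : X → U → ℝ≥0∞) (ν : X → U) (x : X) :
    polCost f g (fun _ => ν) x = g x (ν x) + polCost f g (fun _ => ν) (f x (ν x)) := by
  unfold polCost
  rw [tsum_eq_zero_add' ENNReal.summable]
  congr 1
  exact tsum_congr fun k => by rw [traj_stat_succ]

private lemma polCost_le_of_subinv (f : X → U → X) (g : X → U → ℝ≥0∞) (ν : X → U)
    (J : X → ℝ≥0∞) (h : ∀ x, g x (ν x) + J (f x (ν x)) ≤ J x) (x : X) :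
    polCost f g (fun _ => ν) x ≤ J x := by
  have key : ∀ n x, (∑ i ∈ Finset.range n,
      g (traj f (fun _ => ν) x i) (ν (traj f (fun _ => ν) x i))) ≤ J x := by
    intro n
    induction n with
    | zero => intro x; simp
    | succ n ih =>
      intro x
      rw [Finset.sum_range_succ']
      have hsh : ∀ i, traj f (fun _ => ν) x (i + 1) = traj f (fun _ => ν) (f x (ν x)) i :=
        traj_stat_succ f ν x
      have h0 : traj f (fun _ => ν) x 0 = x := rfl
      simp only [hsh, h0]
      calc (∑ i ∈ Finset.range n, g (traj f (fun _ => ν) (f x (ν x)) i)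
              (ν (traj f (fun _ => ν) (f x (ν x)) i))) + g x (ν x)
          ≤ J (f x (ν x)) + g x (ν x) := add_le_add_left (ih _) _
        _ = g x (ν x) + J (f x (ν x)) := add_comm _ _
        _ ≤ J x := h x
  unfold polCost
  rw [ENNReal.tsum_eq_iSup_nat]
  exact iSup_le fun n => key n x

private lemma fixed_le_polCost (f : X → U → X) (g : X → U → ℝ≥0∞) (Uc : X → Set U)
    (J : X → ℝ≥0∞) (hle : ∀ x, ∀ u ∈ Uc x, J x ≤ g x u + J (f x u))
    (π : ℕ → X → U) (hπ : IsPolicy Uc π) (x : X) (k : ℕ) (hk : J (traj f π x k) = 0) :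
    J x ≤ polCost f g π x := by
  have key : ∀ n, J x ≤ (∑ i ∈ Finset.range n,
      g (traj f π x i) (π i (traj f π x i))) + J (traj f π x n) := by
    intro n
    induction n with
    | zero => simp [traj]
    | succ n ih =>
      refine ih.trans ?_
      rw [Finset.sum_range_succ, add_assoc]
      exact add_le_add_right (hle _ _ (hπ n _)) _
  have h1 := key k
  rw [hk, add_zero] at h1
  exact h1.trans (ENNReal.sum_le_tsum _)

private lemma polCost_stat_t (f : X → U → X) (g : X → U → ℝ≥0∞) (Uc : X → Set U) (t : X)
    (habs : ∀ u ∈ Uc t, f t u = t) (hgt : ∀ u ∈ Uc t, g t u = 0)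
    (ν : X → U) (hν : ∀ x, ν x ∈ Uc x) :
    polCost f g (fun _ => ν) t = 0 := by
  have htraj : ∀ n, traj f (fun _ => ν) t n = t := by
    intro n
    induction n with
    | zero => rfl
    | succ n ih => simp only [traj, ih]; exact habs _ (hν t)
  unfold polCost
  simp [htraj, hgt _ (hν t)]

end AuxPI

/-- If `J* = J⁺`, the policy iteration sequence `{J_{μ^k}}` is pointwise
nonincreasing and converges pointwise to `J*`. -/
theorem stmt14 {X U : Type*} (f : X → U → X) (g : X → U → ℝ≥0∞) (Uc : X → Set U)
    (hU : ∀ x, (Uc x).Nonempty) (t : X)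
    (habs : ∀ u ∈ Uc t, f t u = t) (hgt : ∀ u ∈ Uc t, g t u = 0)
    (hJJ : ∀ x : X, optCost Uc f g x = termOpt Uc f g t x)
    (μ : ℕ → X → U) (hμ : ∀ k x, μ k x ∈ Uc x)
    (himp : ∀ (k : ℕ) (x : X),
      g x (μ (k + 1) x) + polCost f g (fun _ => μ k) (f x (μ (k + 1) x)) =
        ⨅ u ∈ Uc x, (g x u + polCost f g (fun _ => μ k) (f x u))) :
    ∀ x : X, Antitone (fun k => polCost f g (fun _ => μ k) x) ∧
      Filter.Tendsto (fun k => polCost f g (fun _ => μ k) x)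
        Filter.atTop (nhds (optCost Uc f g x)) := by
  intro x
  set Jk : ℕ → X → ℝ≥0∞ := fun k => polCost f g (fun _ => μ k) with hJkdef
  have hstep : ∀ k y, Jk (k + 1) y ≤ Jk k y := by
    intro k
    apply polCost_le_of_subinv
    intro y
    rw [himp k y]
    calc ⨅ u ∈ Uc y, (g y u + polCost f g (fun _ => μ k) (f y u))
        ≤ g y (μ k y) + polCost f g (fun _ => μ k) (f y (μ k y)) :=
          iInf₂_le (μ k y) (hμ k y)
      _ = Jk k y := (polCost_stat f g (μ k) y).symm
  have hanti : ∀ y, Antitone fun k => Jk k y := fun y =>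
    antitone_nat_of_succ_le fun k => hstep k y
  have hsub : ∀ y, ∀ u ∈ Uc y, (⨅ k, Jk k y) ≤ g y u + ⨅ k, Jk k (f y u) := by
    intro y u hu
    rw [ENNReal.add_iInf]
    refine le_iInf fun k => ?_
    calc ⨅ k', Jk k' y ≤ Jk (k + 1) y := iInf_le _ _
      _ = g y (μ (k + 1) y) + Jk (k + 1) (f y (μ (k + 1) y)) := polCost_stat f g _ y
      _ ≤ g y (μ (k + 1) y) + Jk k (f y (μ (k + 1) y)) := add_le_add_right (hstep k _) _
      _ = ⨅ u ∈ Uc y, (g y u + polCost f g (fun _ => μ k) (f y u)) := himp k y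
      _ ≤ g y u + Jk k (f y u) := iInf₂_le u hu
  have ht0 : (⨅ k, Jk k t) = 0 := by
    refine le_antisymm ?_ zero_le
    exact (iInf_le _ 0).trans_eq (polCost_stat_t f g Uc t habs hgt (μ 0) (hμ 0))
  have hupper : (⨅ k, Jk k x) ≤ optCost Uc f g x := by
    rw [hJJ x]
    refine le_iInf fun π => le_iInf fun hπ => ?_
    obtain ⟨hp, k, hk⟩ := hπ
    refine fixed_le_polCost f g Uc (fun y => ⨅ k, Jk k y) hsub π hp x k ?_
    rw [hk]; exact ht0
  have hlower : optCost Uc f g x ≤ ⨅ k, Jk k x := by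
    refine le_iInf fun k => ?_
    exact iInf₂_le (fun _ => μ k) (fun _ y => hμ k y)
  have heq : optCost Uc f g x = ⨅ k, Jk k x := le_antisymm hlower hupper
  refine ⟨hanti x, ?_⟩
  rw [heq]
  exact tendsto_atTop_iInf (hanti x)
end

section
/- For a stationary policy μ and any policy μ̄ with μ̄(x) ∈ argmin_{u ∈ U(x)} { g(x,u) + J_μ(f(x,u)) } for all x, the policy improvement inequality holds: J_μ(x) ≥ inf_{u ∈ U(x)} { g(x,u) + J_μ(f(x,u)) } ≥ J_{μ̄}(x) for all x ∈ X. -/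
open Filter Topology ENNReal

open DetOC


lemma traj_stationary_succ {X U : Type*} (f : X → U → X) (μ : X → U) (x : X) :
    ∀ k, traj f (fun _ => μ) x (k + 1) = traj f (fun _ => μ) (f x (μ x)) k := by
  intro k
  induction k with
  | zero => rfl
  | succ n ih =>
      have h1 : traj f (fun _ => μ) x (n + 1 + 1)
          = f (traj f (fun _ => μ) x (n + 1)) (μ (traj f (fun _ => μ) x (n + 1))) := rfl
      rw [h1, ih]; rfl

lemma polCost_stationary_bellman {X U : Type*} (f : X → U → X) (g : X → U → ℝ≥0∞)
    (μ : X → U) (x : X) :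
    polCost f g (fun _ => μ) x = g x (μ x) + polCost f g (fun _ => μ) (f x (μ x)) := by
  have h : polCost f g (fun _ => μ) x
      = ∑' k, g (traj f (fun _ => μ) x k) (μ (traj f (fun _ => μ) x k)) := rfl
  have h2 : ∀ k, g (traj f (fun _ => μ) x (k + 1)) (μ (traj f (fun _ => μ) x (k + 1)))
      = g (traj f (fun _ => μ) (f x (μ x)) k) (μ (traj f (fun _ => μ) (f x (μ x)) k)) := by
    intro k; rw [traj_stationary_succ]
  rw [h, tsum_eq_zero_add' ENNReal.summable, tsum_congr h2]
  rfl

/-- Policy improvement inequality: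
`J_μ(x) ≥ inf_{u ∈ U(x)} { g(x,u) + J_μ(f(x,u)) } ≥ J_μ̄(x)` for all `x`. -/
theorem stmt15 {X U : Type*} (f : X → U → X) (g : X → U → ℝ≥0∞) (Uc : X → Set U)
    (hU : ∀ x, (Uc x).Nonempty) (t : X)
    (habs : ∀ u ∈ Uc t, f t u = t) (hgt : ∀ u ∈ Uc t, g t u = 0)
    (μ μbar : X → U) (hμ : ∀ x, μ x ∈ Uc x) (hμbar : ∀ x, μbar x ∈ Uc x)
    (hmin : ∀ x : X, g x (μbar x) + polCost f g (fun _ => μ) (f x (μbar x)) =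
      ⨅ u ∈ Uc x, (g x u + polCost f g (fun _ => μ) (f x u))) :
    ∀ x : X,
      (⨅ u ∈ Uc x, (g x u + polCost f g (fun _ => μ) (f x u))) ≤
        polCost f g (fun _ => μ) x ∧
      polCost f g (fun _ => μbar) x ≤
        ⨅ u ∈ Uc x, (g x u + polCost f g (fun _ => μ) (f x u)) := by
  set J : X → ℝ≥0∞ := polCost f g (fun _ => μ) with hJ
  set Q : X → ℝ≥0∞ := fun x => ⨅ u ∈ Uc x, (g x u + J (f x u)) with hQ
  have hQJ : ∀ z, Q z ≤ J z := by
    intro z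
    calc Q z ≤ g z (μ z) + J (f z (μ z)) := biInf_le _ (hμ z)
    _ = J z := (polCost_stationary_bellman f g μ z).symm
  intro x
  refine ⟨hQJ x, ?_⟩
  set y : ℕ → X := traj f (fun _ => μbar) x with hy
  have hyz : y 0 = x := rfl
  have hysucc : ∀ n, y (n + 1) = f (y n) (μbar (y n)) := fun n => rfl
  have key : ∀ n, (∑ k ∈ Finset.range (n + 1), g (y k) (μbar (y k))) + J (y (n + 1)) ≤ Q x := by
    intro n
    induction n with
    | zero =>
      rw [Finset.sum_range_one]
      exact le_of_eq (hmin x)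
    | succ n ih =>
      calc (∑ k ∈ Finset.range (n + 2), g (y k) (μbar (y k))) + J (y (n + 2))
          = (∑ k ∈ Finset.range (n + 1), g (y k) (μbar (y k))) +
            (g (y (n + 1)) (μbar (y (n + 1))) + J (y (n + 2))) := by
            rw [Finset.sum_range_succ, add_assoc]
        _ = (∑ k ∈ Finset.range (n + 1), g (y k) (μbar (y k))) +
            (g (y (n + 1)) (μbar (y (n + 1))) + J (f (y (n+1)) (μbar (y (n+1))))) := rfl
        _ = (∑ k ∈ Finset.range (n + 1), g (y k) (μbar (y k))) + Q (y (n + 1)) := by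
            rw [hmin (y (n+1))]
        _ ≤ (∑ k ∈ Finset.range (n + 1), g (y k) (μbar (y k))) + J (y (n + 1)) :=
            add_le_add le_rfl (hQJ _)
        _ ≤ Q x := ih
  have hsum : ∀ n, (∑ k ∈ Finset.range n, g (y k) (μbar (y k))) ≤ Q x := by
    intro n
    calc (∑ k ∈ Finset.range n, g (y k) (μbar (y k)))
        ≤ (∑ k ∈ Finset.range (n + 1), g (y k) (μbar (y k))) + J (y (n + 1)) := by
          rw [Finset.sum_range_succ]
          exact le_add_of_le_of_nonneg (le_add_of_le_of_nonneg le_rfl zero_le) zero_le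
      _ ≤ Q x := key n
  calc polCost f g (fun _ => μbar) x
      = ⨆ n, ∑ k ∈ Finset.range n, g (y k) (μbar (y k)) := ENNReal.tsum_eq_iSup_nat
    _ ≤ Q x := iSup_le hsum
end

section
/- Consider optimistic policy iteration generating {J_k, μ^k} via T_{μ^k} J_k = T J_k and J_{k+1} = T_{μ^k}^{m_k} J_k for positive integers m_k, starting from J₀ with J₀(t) = 0, J₀ ≥ T J₀, and J₀ ∈ W_p. Assume at least one p-stable policy exists. Then J_k ∈ W_p for all k, the sequence {J_k} is pointwise nonincreasing, and J_k ↓ Ĵ_p. -/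
open Filter Topology ENNReal

open DetOC

namespace DetOCAux

variable {X U : Type*} (f : X → U → X) (g : X → U → ℝ≥0∞) (Uc : X → Set U)

lemma polOp_mono (μ : X → U) : Monotone (polOp f g μ) := fun _ _ h x =>
  add_le_add_right (h _) _

lemma bellman_mono : Monotone (bellmanOp Uc f g) := fun _ _ h _ =>
  iInf₂_mono fun _ _ => add_le_add_right (h _) _

lemma bellman_le_polOp (μ : X → U) (hμ : ∀ x, μ x ∈ Uc x) (J : X → ℝ≥0∞) :
    bellmanOp Uc f g J ≤ polOp f g μ J := fun x => iInf₂_le (μ x) (hμ x)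

lemma iter_mono (μ : X → U) (n : ℕ) {J J' : X → ℝ≥0∞} (h : J ≤ J') :
    (polOp f g μ)^[n] J ≤ (polOp f g μ)^[n] J' := by
  induction n with
  | zero => simpa
  | succ n ih =>
    simp only [Function.iterate_succ_apply']
    exact polOp_mono f g μ ih

lemma traj_bound {π : ℕ → X → U} (hπ : IsPolicy Uc π) {J : X → ℝ≥0∞}
    (hJ : ∀ x u, u ∈ Uc x → J x ≤ g x u + J (f x u)) (x₀ : X) (N : ℕ) :
    J x₀ ≤ (∑ k ∈ Finset.range N, g (traj f π x₀ k) (π k (traj f π x₀ k)))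
      + J (traj f π x₀ N) := by
  induction N with
  | zero => simp [traj]
  | succ N ih =>
    refine ih.trans ?_
    rw [Finset.sum_range_succ, add_assoc]
    exact add_le_add_right (hJ _ _ (hπ N _)) _

lemma le_polCost {π : ℕ → X → U} (hπ : IsPolicy Uc π) {J : X → ℝ≥0∞}
    (hJ : ∀ x u, u ∈ Uc x → J x ≤ g x u + J (f x u)) {x₀ : X}
    (htend : Tendsto (fun k => J (traj f π x₀ k)) atTop (𝓝 0)) :
    J x₀ ≤ polCost f g π x₀ := by
  have h1 : Tendsto (fun N => (∑ k ∈ Finset.range N,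
      g (traj f π x₀ k) (π k (traj f π x₀ k))) + J (traj f π x₀ N)) atTop
      (𝓝 (polCost f g π x₀ + 0)) :=
    (ENNReal.tendsto_nat_tsum _).add htend
  rw [add_zero] at h1
  exact ge_of_tendsto h1 (Eventually.of_forall (traj_bound f g Uc hπ hJ x₀))

end DetOCAux

open DetOCAux

/-- Optimistic policy iteration: starting from `J₀ ∈ W_p` with
`J₀(t) = 0` and `J₀ ≥ T J₀`, the iterates stay in `W_p`, are pointwise nonincreasing,
and converge pointwise (downward) to `Ĵ_p`. -/
theorem stmt17 {X U : Type*} (f : X → U → X) (g : X → U → ℝ≥0∞) (Uc : X → Set U)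
    (hU : ∀ x, (Uc x).Nonempty) (t : X)
    (habs : ∀ u ∈ Uc t, f t u = t) (hgt : ∀ u ∈ Uc t, g t u = 0)
    (p : X → ℝ≥0∞) (hpt : p t = 0) (hppos : ∀ x, x ≠ t → 0 < p x)
    (hptop : ∀ x, p x ≠ ⊤)
    (hfix : bellmanOp Uc f g (restOpt Uc f g p) = restOpt Uc f g p)
    (hSp : InSp Uc f g p t (restOpt Uc f g p))
    (hstab : ∃ (π : ℕ → X → U) (x : X), IsPolicy Uc π ∧ IsStableFrom f g p π x)
    (J : ℕ → X → ℝ≥0∞) (μ : ℕ → X → U) (m : ℕ → ℕ) (hm : ∀ k, 1 ≤ m k)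
    (hμ : ∀ k x, μ k x ∈ Uc x)
    (hJ0t : J 0 t = 0)
    (hJ0T : bellmanOp Uc f g (J 0) ≤ J 0)
    (hJ0Sp : InSp Uc f g p t (J 0))
    (hJ0ge : restOpt Uc f g p ≤ J 0)
    (hTμ : ∀ k : ℕ, polOp f g (μ k) (J k) = bellmanOp Uc f g (J k))
    (hstep : ∀ k : ℕ, J (k + 1) = (polOp f g (μ k))^[m k] (J k)) :
    (∀ k : ℕ, InSp Uc f g p t (J k) ∧ restOpt Uc f g p ≤ J k) ∧
    (∀ x : X, Antitone (fun k => J k x)) ∧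
    (∀ x : X, Filter.Tendsto (fun k => J k x) Filter.atTop
      (nhds (restOpt Uc f g p x))) := by
  set R := restOpt Uc f g p with hRdef
  -- main invariant, by induction on k
  have inv : ∀ k, bellmanOp Uc f g (J k) ≤ J k ∧ R ≤ J k ∧ J k t = 0 := by
    intro k
    induction k with
    | zero => exact ⟨hJ0T, hJ0ge, hJ0t⟩
    | succ k ih =>
      obtain ⟨hT, hRk, hkt⟩ := ih
      have hpol1 : polOp f g (μ k) (J k) ≤ J k := (hTμ k).le.trans hT
      -- iterates are antitone in n
      have hanti : Antitone (fun n => (polOp f g (μ k))^[n] (J k)) := by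
        refine antitone_nat_of_succ_le fun n => ?_
        rw [Function.iterate_succ_apply]
        exact iter_mono f g (μ k) n hpol1
      constructor
      · -- T J_{k+1} ≤ J_{k+1}
        rw [hstep k]
        refine (bellman_le_polOp f g Uc (μ k) (hμ k) _).trans ?_
        have heq : polOp f g (μ k) ((polOp f g (μ k))^[m k] (J k))
            = (polOp f g (μ k))^[m k + 1] (J k) :=
          (Function.iterate_succ_apply' _ _ _).symm
        rw [heq]
        exact hanti (Nat.le_succ _)
      constructor
      · -- R ≤ J (k+1)
        rw [hstep k]
        have : ∀ n, R ≤ (polOp f g (μ k))^[n] (J k) := by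
          intro n
          induction n with
          | zero => exact hRk
          | succ n ih' =>
            rw [Function.iterate_succ_apply']
            calc R = bellmanOp Uc f g R := hfix.symm
              _ ≤ bellmanOp Uc f g ((polOp f g (μ k))^[n] (J k)) :=
                  bellman_mono f g Uc ih'
              _ ≤ _ := bellman_le_polOp f g Uc (μ k) (hμ k) _
        exact this (m k)
      · -- J (k+1) t = 0
        rw [hstep k]
        have : ∀ n, (polOp f g (μ k))^[n] (J k) t = 0 := by
          intro n
          induction n with
          | zero => exact hkt
          | succ n ih' =>
            rw [Function.iterate_succ_apply']
            simp [polOp, hgt _ (hμ k t), habs _ (hμ k t), ih']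
        exact this (m k)
  -- one-step decrease and J_{k+1} ≤ T J_k
  have hstepT : ∀ k, J (k + 1) ≤ bellmanOp Uc f g (J k) := by
    intro k
    have hpol1 : polOp f g (μ k) (J k) ≤ J k := (hTμ k).le.trans (inv k).1
    have hanti : Antitone (fun n => (polOp f g (μ k))^[n] (J k)) := by
      refine antitone_nat_of_succ_le fun n => ?_
      rw [Function.iterate_succ_apply]
      exact iter_mono f g (μ k) n hpol1
    calc J (k + 1) = (polOp f g (μ k))^[m k] (J k) := hstep k
      _ ≤ (polOp f g (μ k))^[1] (J k) := hanti (hm k)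
      _ = polOp f g (μ k) (J k) := by rw [Function.iterate_one]
      _ = bellmanOp Uc f g (J k) := hTμ k
  have hdec : ∀ k, J (k + 1) ≤ J k := fun k => (hstepT k).trans (inv k).1
  have hanti' : ∀ x, Antitone fun k => J k x := fun x =>
    antitone_nat_of_succ_le fun k => hdec k x
  have hle0 : ∀ k, J k ≤ J 0 := fun k x => hanti' x (Nat.zero_le k)
  -- the pointwise infimum
  set Ji : X → ℝ≥0∞ := fun x => ⨅ k, J k x with hJidef
  have hJi_le : ∀ k, Ji ≤ J k := fun k x => iInf_le _ k
  have hJi_sub : ∀ x u, u ∈ Uc x → Ji x ≤ g x u + Ji (f x u) := by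
    intro x u hu
    have : (g x u + Ji (f x u)) = ⨅ k, (g x u + J k (f x u)) := ENNReal.add_iInf
    rw [this]
    refine le_iInf fun k => ?_
    calc Ji x ≤ J (k + 1) x := hJi_le (k + 1) x
      _ ≤ bellmanOp Uc f g (J k) x := hstepT k x
      _ ≤ g x u + J k (f x u) := iInf₂_le u hu
  have hJi_tend : ∀ (π : ℕ → X → U) (x₀ : X), IsPolicy Uc π →
      IsStableFrom f g p π x₀ →
      Tendsto (fun k => Ji (traj f π x₀ k)) atTop (𝓝 0) := by
    intro π x₀ hπ hst
    refine tendsto_of_tendsto_of_tendsto_of_le_of_le tendsto_const_nhds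
      (hJ0Sp.2 π x₀ hπ hst) (fun n => zero_le) (fun n => hJi_le 0 _)
  have hJi_le_R : Ji ≤ R := by
    intro x
    rw [hRdef]
    refine le_iInf fun π => le_iInf fun hπ => ?_
    exact le_polCost f g Uc hπ.1 hJi_sub (hJi_tend π x hπ.1 hπ.2)
  have hJi_eq : ∀ x, Ji x = R x := fun x =>
    le_antisymm (hJi_le_R x) (le_iInf fun k => (inv k).2.1 x)
  refine ⟨fun k => ⟨⟨(inv k).2.2, ?_⟩, (inv k).2.1⟩, hanti', ?_⟩
  · intro π x₀ hπ hst
    refine tendsto_of_tendsto_of_tendsto_of_le_of_le tendsto_const_nhds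
      (hJ0Sp.2 π x₀ hπ hst) (fun n => zero_le) (fun n => hle0 k _)
  · intro x
    have := tendsto_atTop_iInf (hanti' x)
    rwa [show (⨅ k, J k x) = R x from hJi_eq x] at this
end
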